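/- arXiv:2404.10467 — 4 statements merged into one kernel-verified Lean document; each statement's English description precedes it below -/
import Mathlib

section
/- A finite set P of points in the continuum C(N) of a connected network N (where every edge has length at most δ) is a δ-cover of N if and only if for every edge e=(v_a,v_b) either P contains a point of e, or max_{p∈P}(δ−d(v_a,p))_+ + max_{p∈P}(δ−d(v_b,p))_+ ≥ ℓ_e. -/
/-- The set of points of an edge of length `len` parametrized by `param` on `[0, len]`. -/
def edgePts {X : Type} (len : ℝ) (param : ℝ → X) : Set X :=
  param '' Set.Icc 0 len

/-- A finite set `P` of points in the continuum of a connected network (all of whose edges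
have length at most `δ`) is a `δ`-cover if and only if for every edge `e = (v_a, v_b)`
either `P` contains a point of `e`, or
`max_{p∈P}(δ − d(v_a,p))₊ + max_{p∈P}(δ − d(v_b,p))₊ ≥ ℓ_e`. -/
theorem edge_cover_condition
    (X : Type) [MetricSpace X] (E : Type) [Fintype E]
    (len : E → ℝ) (param : E → ℝ → X)
    (hlen_pos : ∀ e, 0 < len e)
    (δ : ℝ) (hδ : 0 < δ)
    (hshort : ∀ e, len e ≤ δ)
    -- the continuum is the union of the edges
    (hsurj : ∀ x : X, ∃ e q, q ∈ Set.Icc 0 (len e) ∧ param e q = x)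
    -- along an edge, distance is at most the difference of coordinates
    (hdist_edge : ∀ (e : E) (q q' : ℝ), q ∈ Set.Icc 0 (len e) → q' ∈ Set.Icc 0 (len e) →
      dist (param e q) (param e q') ≤ |q - q'|)
    -- shortest-path metric: the distance from a point outside an edge to a point of the
    -- edge goes through one of the two endpoints
    (hnet : ∀ (x : X) (e : E) (q : ℝ), q ∈ Set.Icc 0 (len e) →
      x ∉ edgePts (len e) (param e) →
      dist x (param e q)
        = min (dist x (param e 0) + q) (dist x (param e (len e)) + (len e - q)))
    (P : Finset X) (hP : P.Nonempty) :
    (∀ x : X, ∃ p ∈ P, dist x p ≤ δ) ↔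
      ∀ e : E,
        (∃ p ∈ P, p ∈ edgePts (len e) (param e)) ∨
        len e ≤ P.sup' hP (fun p => max (δ - dist (param e 0) p) 0)
                + P.sup' hP (fun p => max (δ - dist (param e (len e)) p) 0) := by
  constructor
  · intro hcov e
    by_cases hedge : ∃ p ∈ P, p ∈ edgePts (len e) (param e)
    · exact Or.inl hedge
    right
    set A := P.sup' hP (fun p => max (δ - dist (param e 0) p) 0) with hA
    set B := P.sup' hP (fun p => max (δ - dist (param e (len e)) p) 0) with hB
    by_contra hlt
    push_neg at hlt
    obtain ⟨p0, hp0⟩ := hP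
    have hA0 : (0:ℝ) ≤ A := le_trans (le_max_right _ 0)
      (Finset.le_sup' (fun p => max (δ - dist (param e 0) p) 0) hp0)
    have hB0 : (0:ℝ) ≤ B := le_trans (le_max_right _ 0)
      (Finset.le_sup' (fun p => max (δ - dist (param e (len e)) p) 0) hp0)
    set q := (A + (len e - B)) / 2 with hq
    have hq1 : A < q := by rw [hq]; linarith
    have hq2 : q < len e - B := by rw [hq]; linarith
    have hqmem : q ∈ Set.Icc 0 (len e) := ⟨by linarith, by linarith⟩
    obtain ⟨p, hpP, hpd⟩ := hcov (param e q)
    have hnp : p ∉ edgePts (len e) (param e) := fun h => hedge ⟨p, hpP, h⟩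
    have hd := hnet p e q hqmem hnp
    rw [dist_comm (param e q) p, hd] at hpd
    rcases min_le_iff.mp hpd with h1 | h2
    · have : q ≤ max (δ - dist (param e 0) p) 0 := by
        rw [dist_comm]
        exact le_trans (by linarith) (le_max_left _ _)
      have : q ≤ A := le_trans this
        (Finset.le_sup' (fun p => max (δ - dist (param e 0) p) 0) hpP)
      linarith
    · have : len e - q ≤ max (δ - dist (param e (len e)) p) 0 := by
        rw [dist_comm]
        exact le_trans (by linarith) (le_max_left _ _)
      have : len e - q ≤ B := le_trans this
        (Finset.le_sup' (fun p => max (δ - dist (param e (len e)) p) 0) hpP)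
      linarith
  · intro h x
    obtain ⟨e, q, hqmem, rfl⟩ := hsurj x
    obtain ⟨hq0, hql⟩ := hqmem
    rcases h e with ⟨p, hpP, q', ⟨hq'0, hq'l⟩, hpq'⟩ | hsum
    · refine ⟨p, hpP, ?_⟩
      rw [← hpq']
      calc dist (param e q) (param e q') ≤ |q - q'| :=
            hdist_edge e q q' ⟨hq0, hql⟩ ⟨hq'0, hq'l⟩
        _ ≤ len e := abs_le.mpr ⟨by linarith, by linarith⟩
        _ ≤ δ := hshort e
    · obtain ⟨pA, hpA, hApA⟩ := Finset.exists_mem_eq_sup' hP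
        (fun p => max (δ - dist (param e 0) p) 0)
      obtain ⟨pB, hpB, hBpB⟩ := Finset.exists_mem_eq_sup' hP
        (fun p => max (δ - dist (param e (len e)) p) 0)
      rw [hApA, hBpB] at hsum
      set dA := dist (param e 0) pA with hdA
      set dB := dist (param e (len e)) pB with hdB
      by_cases h1 : 0 < max (δ - dA) 0 ∧ q ≤ max (δ - dA) 0
      · obtain ⟨hpos, hqle⟩ := h1
        have hx : 0 < δ - dA := by
          rcases lt_max_iff.mp hpos with h | h
          · exact h
          · exact absurd h (lt_irrefl 0)
        have hmax : max (δ - dA) 0 = δ - dA := max_eq_left hx.le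
        refine ⟨pA, hpA, ?_⟩
        have h01 : dist (param e q) (param e 0) ≤ q := by
          have := hdist_edge e q 0 ⟨hq0, hql⟩ ⟨le_refl 0, (hlen_pos e).le⟩
          rwa [sub_zero, abs_of_nonneg hq0] at this
        calc dist (param e q) pA ≤ dist (param e q) (param e 0) + dA :=
              dist_triangle _ _ _
          _ ≤ q + dA := by linarith
          _ ≤ δ := by rw [hmax] at hqle; linarith
      · -- show len e - q ≤ max (δ - dB) 0 and that max is positive
        have key : len e - q ≤ max (δ - dB) 0 ∧ 0 < max (δ - dB) 0 := by
          push_neg at h1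
          have hAnn : (0:ℝ) ≤ max (δ - dA) 0 := le_max_right _ _
          by_cases hApos : 0 < max (δ - dA) 0
          · have hq' : max (δ - dA) 0 < q := h1 hApos
            constructor
            · linarith
            · linarith
          · have hA0 : max (δ - dA) 0 = 0 := le_antisymm (not_lt.mp hApos) hAnn
            rw [hA0, zero_add] at hsum
            constructor
            · linarith
            · linarith [hlen_pos e]
        obtain ⟨hle, hpos⟩ := key
        have hx : 0 < δ - dB := by
          rcases lt_max_iff.mp hpos with h | h
          · exact h
          · exact absurd h (lt_irrefl 0)
        have hmax : max (δ - dB) 0 = δ - dB := max_eq_left hx.le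
        refine ⟨pB, hpB, ?_⟩
        have h01 : dist (param e q) (param e (len e)) ≤ len e - q := by
          have := hdist_edge e q (len e) ⟨hq0, hql⟩ ⟨(hlen_pos e).le, le_refl _⟩
          rwa [abs_of_nonpos (by linarith), neg_sub] at this
        calc dist (param e q) pB ≤ dist (param e q) (param e (len e)) + dB :=
              dist_triangle _ _ _
          _ ≤ (len e - q) + dB := by linarith
          _ ≤ δ := by rw [hmax] at hle; linarith
end

section
/- Let P_h = {x∈ℝⁿ : Aₕx ≤ bₕ, x ≥ 0} for h∈[m], and assume for each h that {x : Aₕx ≤ 0, x ≥ 0} = {0}. Then the union D = ∪ₕ P_h equals the set {x : ∃ x¹,…,xᵐ ∈ ℝⁿ₊, z∈{0,1}ᵐ, x = Σₕ xʰ, Σₕ zₕ = 1, and Aₕxʰ ≤ bₕ zₕ for all h}. -/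
/-- Balas' disjunctive programming lemma, exact (binary) part.
Let `P_h = {x ∈ ℝⁿ : A_h x ≤ b_h, x ≥ 0}` for `h ∈ [m]`, and assume for each `h` that
`{x : A_h x ≤ 0, x ≥ 0} = {0}`.  Then `D = ∪_h P_h` equals
`{x : ∃ x¹,…,xᵐ ∈ ℝⁿ₊, z ∈ {0,1}ᵐ, x = Σ_h xʰ, Σ_h z_h = 1, A_h xʰ ≤ b_h z_h for all h}`. -/
theorem balas_disjunctive_binary
    (n m : ℕ) (k : Fin m → ℕ)
    (A : ∀ h : Fin m, Matrix (Fin (k h)) (Fin n) ℝ)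
    (b : ∀ h : Fin m, Fin (k h) → ℝ)
    (hrec : ∀ h : Fin m, {x : Fin n → ℝ | (A h).mulVec x ≤ 0 ∧ 0 ≤ x} = {0}) :
    (⋃ h : Fin m, {x : Fin n → ℝ | (A h).mulVec x ≤ b h ∧ 0 ≤ x}) =
      {x : Fin n → ℝ | ∃ (xs : Fin m → Fin n → ℝ) (z : Fin m → ℝ),
        (∀ h, 0 ≤ xs h) ∧ (∀ h, z h = 0 ∨ z h = 1) ∧
        x = ∑ h, xs h ∧ (∑ h, z h) = 1 ∧
        ∀ h, (A h).mulVec (xs h) ≤ z h • b h} := by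
  ext x
  simp only [Set.mem_iUnion, Set.mem_setOf_eq]
  constructor
  · rintro ⟨h₀, hAx, hx⟩
    refine ⟨fun h => if h = h₀ then x else 0, fun h => if h = h₀ then 1 else 0, ?_, ?_, ?_, ?_, ?_⟩
    · intro h; dsimp only; split <;> simp [hx, le_refl]
    · intro h; dsimp only; split <;> simp
    · simp [Finset.sum_ite_eq']
    · simp [Finset.sum_ite_eq']
    · intro h
      by_cases hh : h = h₀
      · subst hh; simpa using hAx
      · simp [hh, Matrix.mulVec_zero]
  · rintro ⟨xs, z, hxs, hz, hx, hzsum, hA⟩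
    have hz0 : ∀ h, 0 ≤ z h := fun h => by rcases hz h with h1 | h1 <;> simp [h1]
    obtain ⟨h₀, hh₀⟩ : ∃ h₀, z h₀ = 1 := by
      by_contra hc
      push_neg at hc
      have : ∀ h, z h = 0 := fun h => (hz h).resolve_right (hc h)
      simp [this] at hzsum
    have hzero : ∀ h, h ≠ h₀ → z h = 0 := by
      intro h hne
      rcases hz h with h1 | h1
      · exact h1
      · exfalso
        have hsub : ({h, h₀} : Finset (Fin m)) ⊆ Finset.univ := Finset.subset_univ _
        have h2 : (∑ i ∈ ({h, h₀} : Finset (Fin m)), z i) ≤ ∑ i, z i :=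
          Finset.sum_le_sum_of_subset_of_nonneg hsub (fun i _ _ => hz0 i)
        rw [Finset.sum_pair hne, h1, hh₀, hzsum] at h2
        linarith
    have hxszero : ∀ h, h ≠ h₀ → xs h = 0 := by
      intro h hne
      have hmem : xs h ∈ {x : Fin n → ℝ | (A h).mulVec x ≤ 0 ∧ 0 ≤ x} := by
        refine ⟨?_, hxs h⟩
        have := hA h
        rwa [hzero h hne, zero_smul] at this
      rw [hrec h] at hmem
      exact hmem
    refine ⟨h₀, ?_, ?_⟩
    · have hxeq : x = xs h₀ := by
        rw [hx, Finset.sum_eq_single h₀ (fun h _ hne => hxszero h hne) (by simp)]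
      rw [hxeq]
      have := hA h₀
      rwa [hh₀, one_smul] at this
    · rw [hx]
      exact Finset.sum_nonneg (fun h _ => hxs h)
end

section
/- Let P_h = {x∈ℝⁿ : Aₕx ≤ bₕ, x ≥ 0} for h∈[m], each nonempty, with {x : Aₕx ≤ 0, x ≥ 0} = {0} for each h. Then the convex hull of D = ∪ₕ P_h equals {x : ∃ x¹,…,xᵐ ∈ ℝⁿ₊, z∈[0,1]ᵐ, x = Σₕ xʰ, Σₕ zₕ = 1, Aₕxʰ ≤ bₕzₕ for all h}. -/
/-- Balas' disjunctive programming lemma, convex-hull part.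
Let `P_h = {x ∈ ℝⁿ : A_h x ≤ b_h, x ≥ 0}` for `h ∈ [m]`, each nonempty, with
`{x : A_h x ≤ 0, x ≥ 0} = {0}` for each `h`.  Then the convex hull of `D = ∪_h P_h` equals
`{x : ∃ x¹,…,xᵐ ∈ ℝⁿ₊, z ∈ [0,1]ᵐ, x = Σ_h xʰ, Σ_h z_h = 1, A_h xʰ ≤ b_h z_h for all h}`. -/
theorem balas_disjunctive_convex_hull
    (n m : ℕ) (k : Fin m → ℕ)
    (A : ∀ h : Fin m, Matrix (Fin (k h)) (Fin n) ℝ)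
    (b : ∀ h : Fin m, Fin (k h) → ℝ)
    (hne : ∀ h : Fin m, {x : Fin n → ℝ | (A h).mulVec x ≤ b h ∧ 0 ≤ x}.Nonempty)
    (hrec : ∀ h : Fin m, {x : Fin n → ℝ | (A h).mulVec x ≤ 0 ∧ 0 ≤ x} = {0}) :
    convexHull ℝ (⋃ h : Fin m, {x : Fin n → ℝ | (A h).mulVec x ≤ b h ∧ 0 ≤ x}) =
      {x : Fin n → ℝ | ∃ (xs : Fin m → Fin n → ℝ) (z : Fin m → ℝ),
        (∀ h, 0 ≤ xs h) ∧ (∀ h, z h ∈ Set.Icc (0:ℝ) 1) ∧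
        x = ∑ h, xs h ∧ (∑ h, z h) = 1 ∧
        ∀ h, (A h).mulVec (xs h) ≤ z h • b h} := by
  apply Set.Subset.antisymm
  · apply convexHull_min
    · rintro x hx
      simp only [Set.mem_iUnion, Set.mem_setOf_eq] at hx
      obtain ⟨h0, hA, hx0⟩ := hx
      refine ⟨fun h => if h = h0 then x else 0, fun h => if h = h0 then 1 else 0,
        ?_, ?_, ?_, ?_, ?_⟩
      · intro h; by_cases hh : h = h0 <;> simp [hh, hx0]
      · intro h; by_cases hh : h = h0 <;> simp [hh]
      · simp [Finset.sum_ite_eq']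
      · simp
      · intro h
        by_cases hh : h = h0
        · subst hh; simpa using hA
        · simp [hh, Matrix.mulVec_zero]
    · rintro x ⟨xs, z, hxs, hz, hxsum, hzsum, hAb⟩ y ⟨ys, w, hys, hw, hysum, hwsum, hAb'⟩
        a c ha hc hac
      refine ⟨fun h => a • xs h + c • ys h, fun h => a * z h + c * w h, ?_, ?_, ?_, ?_, ?_⟩
      · intro h
        exact add_nonneg (smul_nonneg ha (hxs h)) (smul_nonneg hc (hys h))
      · intro h
        constructor
        · exact add_nonneg (mul_nonneg ha (hz h).1) (mul_nonneg hc (hw h).1)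
        · calc a * z h + c * w h ≤ a * 1 + c * 1 := by
                gcongr
                exacts [(hz h).2, (hw h).2]
            _ = 1 := by linarith
      · rw [hxsum, hysum]
        ext i
        simp [Finset.mul_sum, Finset.sum_add_distrib]
      · show ∑ h, (a * z h + c * w h) = 1
        rw [Finset.sum_add_distrib, ← Finset.mul_sum, ← Finset.mul_sum, hzsum, hwsum,
          mul_one, mul_one]
        exact hac
      · intro h
        have h1 : (A h).mulVec (a • xs h) ≤ a • (z h • b h) :=
          (Matrix.mulVec_smul (A h) a (xs h)) ▸ smul_le_smul_of_nonneg_left (hAb h) ha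
        have h2 : (A h).mulVec (c • ys h) ≤ c • (w h • b h) :=
          (Matrix.mulVec_smul (A h) c (ys h)) ▸ smul_le_smul_of_nonneg_left (hAb' h) hc
        calc (A h).mulVec (a • xs h + c • ys h)
            = (A h).mulVec (a • xs h) + (A h).mulVec (c • ys h) := Matrix.mulVec_add _ _ _
          _ ≤ a • (z h • b h) + c • (w h • b h) := add_le_add h1 h2
          _ = (a * z h + c * w h) • b h := by
              ext i; simp [add_mul, mul_assoc]
  · rintro x ⟨xs, z, hxs, hz, hxsum, hzsum, hAb⟩
    -- when z h = 0, xs h = 0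
    have hzero : ∀ h, z h = 0 → xs h = 0 := by
      intro h hh
      have : xs h ∈ {x : Fin n → ℝ | (A h).mulVec x ≤ 0 ∧ 0 ≤ x} := by
        refine ⟨?_, hxs h⟩
        have := hAb h
        rwa [hh, zero_smul] at this
      rw [hrec h] at this
      simpa using this
    set y : Fin m → Fin n → ℝ :=
      fun h => if z h = 0 then (hne h).choose else (z h)⁻¹ • xs h with hy
    have hymem : ∀ h, y h ∈ ⋃ h' : Fin m,
        {x : Fin n → ℝ | (A h').mulVec x ≤ b h' ∧ 0 ≤ x} := by
      intro h
      refine Set.mem_iUnion.2 ⟨h, ?_⟩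
      by_cases hh : z h = 0
      · simp only [hy, hh, if_true]
        exact (hne h).choose_spec
      · have hzpos : 0 < z h := lt_of_le_of_ne (hz h).1 (Ne.symm hh)
        simp only [hy, hh, if_false]
        constructor
        · rw [Matrix.mulVec_smul]
          have := smul_le_smul_of_nonneg_left (hAb h) (inv_nonneg.2 hzpos.le)
          rwa [inv_smul_smul₀ hh] at this
        · exact smul_nonneg (inv_nonneg.2 hzpos.le) (hxs h)
    have hrep : x = ∑ h, z h • y h := by
      rw [hxsum]
      apply Finset.sum_congr rfl
      intro h _
      by_cases hh : z h = 0
      · rw [hh, zero_smul, hzero h hh]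
      · simp only [hy, hh, if_false, smul_inv_smul₀ hh]
    have := Finset.centerMass_mem_convexHull (Finset.univ : Finset (Fin m))
      (fun h _ => (hz h).1) (by rw [hzsum]; norm_num)
      (fun h _ => hymem h)
    rwa [Finset.centerMass_eq_of_sum_1 _ _ hzsum, ← hrep] at this
end

section
/- In the lifted-variable reformulation of a bounded disjunction, the feasible set D²_v of the disjunctive-programming MILP system equals the feasible set D¹_v of the big-M MILP system, and the continuous relaxation of the disjunctive-programming system equals conv(D²_v), which is contained in the continuous relaxation of the big-M system: D¹_v = D²_v ⊆ conv(D²_v) = D̄²_v ⊆ D̄¹_v. -/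
/-! Big-M versus disjunctive-programming formulations of the vertex subsystem.
A point of the variable space is `(x_v, z, q, r_v)`.  Pairs `(e',i')` are encoded as
elements of `E × Bool` (`i' = b` corresponding to `true`). -/

/-- The variable space `(x_v, z, q, r_v)`. -/
abbrev VarPt (E : Type) : Type := ℝ × ((E × Bool) → ℝ) × (E → ℝ) × ℝ

/-- `τ_{ve'i'}(q) = d(v,v'_{i'}) + 1[i'=a] q + 1[i'=b](ℓ_{e'} − q)`. -/
def tauFn {E : Type} (ℓ : E → ℝ) (dvv : E × Bool → ℝ) (p : E × Bool) (q : ℝ) : ℝ :=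
  dvv p + (if p.2 then ℓ p.1 - q else q)

/-- `R_{ve'i'}(w,y) = (δ − d(v,v'_{i'}) − 1[i'=b] ℓ_{e'}) y + (1[i'=b] − 1[i'=a]) w`. -/
def Rfn {E : Type} (ℓ : E → ℝ) (dvv : E × Bool → ℝ) (δ : ℝ) (p : E × Bool)
    (w y : ℝ) : ℝ :=
  (δ - dvv p - (if p.2 then ℓ p.1 else 0)) * y + (if p.2 then 1 else -1) * w

/-- Constraints shared by both systems: SOS constraint, bounds on `q`, `r_v ≥ 0`. -/
def sharedCons {E : Type} [DecidableEq E] (I : Finset (E × Bool)) (ℓ : E → ℝ)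
    (s : VarPt E) : Prop :=
  s.1 + ∑ p ∈ I, s.2.1 p = 1 ∧
  (∀ e ∈ I.image Prod.fst, s.2.2.1 e ∈ Set.Icc 0 (ℓ e)) ∧
  0 ≤ s.2.2.2

/-- The big-M inequalities with constants `M_v = δ`, `M_{ve'i'} = δ + ℓ_{e'}`. -/
def bigMCons {E : Type} (I : Finset (E × Bool)) (ℓ : E → ℝ) (dvv : E × Bool → ℝ)
    (δ : ℝ) (s : VarPt E) : Prop :=
  s.2.2.2 ≤ δ * (1 - s.1) ∧
  ∀ p ∈ I, s.2.2.2 ≤ (δ + ℓ p.1) * (1 - s.2.1 p) + δ - tauFn ℓ dvv p (s.2.2.1 p.1)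

/-- The disjunctive-programming (lifted) inequalities, with the duplicated variables
`r_{ve'i'}, q_{ve'i'}, q_{ve'}` projected out. -/
def dpCons {E : Type} [DecidableEq E] (I : Finset (E × Bool)) (ℓ : E → ℝ)
    (dvv : E × Bool → ℝ) (δ : ℝ) (s : VarPt E) : Prop :=
  ∃ (rr qq : (E × Bool) → ℝ) (qv : E → ℝ),
    (∀ p ∈ I, 0 ≤ rr p ∧ 0 ≤ qq p) ∧
    (∀ e ∈ I.image Prod.fst, 0 ≤ qv e) ∧
    s.2.2.2 = ∑ p ∈ I, rr p ∧
    (∀ e ∈ I.image Prod.fst,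
      s.2.2.1 e = qv e + ∑ p ∈ I.filter (fun p => p.1 = e), qq p) ∧
    (∀ p ∈ I, rr p ≤ Rfn ℓ dvv δ p (qq p) (s.2.1 p)) ∧
    (∀ p ∈ I, qq p ≤ s.2.1 p * ℓ p.1) ∧
    (∀ e ∈ I.image Prod.fst,
      qv e ≤ (1 - ∑ p ∈ I.filter (fun p => p.1 = e), s.2.1 p) * ℓ e)

/-- Binary requirements on `x_v` and `z`. -/
def binCons {E : Type} (I : Finset (E × Bool)) (s : VarPt E) : Prop :=
  (s.1 = 0 ∨ s.1 = 1) ∧ ∀ p ∈ I, s.2.1 p = 0 ∨ s.2.1 p = 1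

/-- Continuous relaxation of the binary requirements. -/
def relaxCons {E : Type} (I : Finset (E × Bool)) (s : VarPt E) : Prop :=
  s.1 ∈ Set.Icc (0:ℝ) 1 ∧ ∀ p ∈ I, s.2.1 p ∈ Set.Icc (0:ℝ) 1

section Aux
variable {E : Type} [DecidableEq E]

/-- Per-term bound: `Rfn ≤ δ z`. -/
lemma term_bound1 (ℓ : E → ℝ) (dvv : E × Bool → ℝ) (δ : ℝ) (p : E × Bool)
    (hd0 : 0 ≤ dvv p) (qqp zp : ℝ) (hq0 : 0 ≤ qqp) (hqz : qqp ≤ zp * ℓ p.1)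
    (hz0 : 0 ≤ zp) : Rfn ℓ dvv δ p qqp zp ≤ δ * zp := by
  unfold Rfn
  rcases p with ⟨e, b⟩
  cases b <;> simp <;> nlinarith

lemma term_bound2 (ℓ : E → ℝ) (dvv : E × Bool → ℝ) (δ : ℝ) (p : E × Bool)
    (hd0 : 0 ≤ dvv p) (hdτ : dvv p + ℓ p.1 ≤ δ)
    (qqp zp qe : ℝ) (hq0 : 0 ≤ qqp) (hqz : qqp ≤ zp * ℓ p.1)
    (hz0 : 0 ≤ zp) (hz1 : zp ≤ 1) (hqe0 : 0 ≤ qe) (hqe1 : qe ≤ ℓ p.1)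
    (hcase : if p.2 then qqp ≤ qe else qe - qqp ≤ (1 - zp) * ℓ p.1) :
    Rfn ℓ dvv δ p qqp zp ≤ ℓ p.1 * (1 - zp) + δ - tauFn ℓ dvv p qe := by
  unfold Rfn tauFn
  rcases p with ⟨e, b⟩
  cases b <;> simp at hcase ⊢ <;> nlinarith
end Aux

section Main
variable {E : Type} [DecidableEq E]

lemma dp_to_bigM (I : Finset (E × Bool)) (ℓ : E → ℝ) (dvv : E × Bool → ℝ) (δ : ℝ)
    (hℓ : ∀ e, 0 < ℓ e) (hd0 : ∀ p ∈ I, 0 ≤ dvv p) (hdτ : ∀ p ∈ I, dvv p + ℓ p.1 ≤ δ)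
    (s : VarPt E) (hs : sharedCons I ℓ s) (hdp : dpCons I ℓ dvv δ s)
    (hrel : relaxCons I s) : bigMCons I ℓ dvv δ s := by
  obtain ⟨hsum, hqb, hr0⟩ := hs
  obtain ⟨rr, qq, qv, hpos, hqv0, hrsum, hqsum, hRle, hqqz, hqvle⟩ := hdp
  obtain ⟨hx01, hz01⟩ := hrel
  -- basic facts
  have hRbd : ∀ p ∈ I, Rfn ℓ dvv δ p (qq p) (s.2.1 p) ≤ δ * s.2.1 p := fun p hp =>
    term_bound1 ℓ dvv δ p (hd0 p hp) _ _ (hpos p hp).2 (hqqz p hp) (hz01 p hp).1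
  have hzsum : ∑ p ∈ I, s.2.1 p = 1 - s.1 := by linarith
  constructor
  · calc s.2.2.2 = ∑ p ∈ I, rr p := hrsum
    _ ≤ ∑ p ∈ I, δ * s.2.1 p :=
        Finset.sum_le_sum (fun p hp => le_trans (hRle p hp) (hRbd p hp))
    _ = δ * (1 - s.1) := by rw [← Finset.mul_sum, hzsum]
  · intro p hp
    have hpe : p.1 ∈ I.image Prod.fst := Finset.mem_image_of_mem _ hp
    have hpf : p ∈ I.filter (fun p' => p'.1 = p.1) := by
      simp [Finset.mem_filter, hp]
    -- sum over the erase
    have hsplit : rr p + ∑ p' ∈ I.erase p, rr p' = ∑ p' ∈ I, rr p' :=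
      Finset.add_sum_erase I rr hp
    have herase : ∑ p' ∈ I.erase p, rr p' ≤ δ * (1 - s.1 - s.2.1 p) := by
      have h1 : ∑ p' ∈ I.erase p, rr p' ≤ ∑ p' ∈ I.erase p, δ * s.2.1 p' :=
        Finset.sum_le_sum (fun p' hp' => le_trans (hRle p' (Finset.mem_of_mem_erase hp'))
          (hRbd p' (Finset.mem_of_mem_erase hp')))
      have h2 : s.2.1 p + ∑ p' ∈ I.erase p, s.2.1 p' = ∑ p' ∈ I, s.2.1 p' :=
        Finset.add_sum_erase I _ hp
      calc ∑ p' ∈ I.erase p, rr p' ≤ ∑ p' ∈ I.erase p, δ * s.2.1 p' := h1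
      _ = δ * ∑ p' ∈ I.erase p, s.2.1 p' := by rw [← Finset.mul_sum]
      _ = δ * (1 - s.1 - s.2.1 p) := by rw [show ∑ p' ∈ I.erase p, s.2.1 p'
            = 1 - s.1 - s.2.1 p by linarith]
    -- the case fact
    have hqe := hqsum p.1 hpe
    have hcase : if p.2 then qq p ≤ s.2.2.1 p.1
        else s.2.2.1 p.1 - qq p ≤ (1 - s.2.1 p) * ℓ p.1 := by
      have hqqle : qq p + ∑ p' ∈ (I.filter (fun p' => p'.1 = p.1)).erase p, qq p'
          = ∑ p' ∈ I.filter (fun p' => p'.1 = p.1), qq p' :=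
        Finset.add_sum_erase _ qq hpf
      have hzzle : s.2.1 p + ∑ p' ∈ (I.filter (fun p' => p'.1 = p.1)).erase p, s.2.1 p'
          = ∑ p' ∈ I.filter (fun p' => p'.1 = p.1), s.2.1 p' :=
        Finset.add_sum_erase _ _ hpf
      have hqq_pos : ∀ p' ∈ (I.filter (fun p' => p'.1 = p.1)).erase p, 0 ≤ qq p' :=
        fun p' hp' => (hpos p' (Finset.mem_filter.mp (Finset.mem_of_mem_erase hp')).1).2
      split
      · -- b-case: qq p ≤ q_{p.1}
        rw [hqe, ← hqqle]
        have : 0 ≤ ∑ p' ∈ (I.filter (fun p' => p'.1 = p.1)).erase p, qq p' :=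
          Finset.sum_nonneg hqq_pos
        have := hqv0 p.1 hpe
        linarith
      · -- a-case
        have hbd : ∀ p' ∈ (I.filter (fun p' => p'.1 = p.1)).erase p,
            qq p' ≤ s.2.1 p' * ℓ p.1 := by
          intro p' hp'
          have hmem := Finset.mem_of_mem_erase hp'
          have he' : p'.1 = p.1 := (Finset.mem_filter.mp hmem).2
          have := hqqz p' (Finset.mem_filter.mp hmem).1
          rw [he'] at this; exact this
        have h3 : ∑ p' ∈ (I.filter (fun p' => p'.1 = p.1)).erase p, qq p'
            ≤ (∑ p' ∈ (I.filter (fun p' => p'.1 = p.1)).erase p, s.2.1 p') * ℓ p.1 := by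
          rw [Finset.sum_mul]
          exact Finset.sum_le_sum hbd
        have h4 := hqvle p.1 hpe
        rw [hqe]
        nlinarith [hℓ p.1]
    have := term_bound2 ℓ dvv δ p (hd0 p hp) (hdτ p hp) (qq p) (s.2.1 p) (s.2.2.1 p.1)
      (hpos p hp).2 (hqqz p hp) (hz01 p hp).1 (hz01 p hp).2
      (hqb p.1 hpe).1 (hqb p.1 hpe).2 hcase
    have hR := hRle p hp
    have hx0 := hx01.1
    have hδ0 : (0:ℝ) < δ := by have := hd0 p hp; have := hℓ p.1; linarith [hdτ p hp]
    have hmono : δ * (1 - s.1 - s.2.1 p) ≤ δ * (1 - s.2.1 p) :=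
      mul_le_mul_of_nonneg_left (by linarith) hδ0.le
    linarith
end Main

lemma bin_to_relax {E : Type} (I : Finset (E × Bool)) (s : VarPt E)
    (h : binCons I s) : relaxCons I s := by
  obtain ⟨hx, hz⟩ := h
  refine ⟨?_, fun p hp => ?_⟩
  · rcases hx with h | h <;> simp [h]
  · rcases hz p hp with h | h <;> simp [h]

lemma bigM_bin_to_dp {E : Type} [DecidableEq E]
    (I : Finset (E × Bool)) (ℓ : E → ℝ) (dvv : E × Bool → ℝ) (δ : ℝ)
    (hℓ : ∀ e, 0 < ℓ e) (hd0 : ∀ p ∈ I, 0 ≤ dvv p) (hdτ : ∀ p ∈ I, dvv p + ℓ p.1 ≤ δ)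
    (s : VarPt E) (hs : sharedCons I ℓ s) (hM : bigMCons I ℓ dvv δ s)
    (hb : binCons I s) : dpCons I ℓ dvv δ s := by
  obtain ⟨hsum, hqb, hr0⟩ := hs
  obtain ⟨hM1, hM2⟩ := hM
  obtain ⟨hx01, hz01⟩ := hb
  rcases hx01 with hx0 | hx1
  · -- x = 0 : exactly one z is 1
    rw [hx0, zero_add] at hsum
    have hex : ∃ p0 ∈ I, s.2.1 p0 = 1 := by
      by_contra hcon
      push_neg at hcon
      have : ∀ p ∈ I, s.2.1 p = 0 := by
        intro p hp
        rcases hz01 p hp with h | h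
        · exact h
        · exact absurd h (hcon p hp)
      rw [Finset.sum_eq_zero this] at hsum
      norm_num at hsum
    obtain ⟨p0, hp0, hz1⟩ := hex
    have hz0 : ∀ p ∈ I, p ≠ p0 → s.2.1 p = 0 := by
      intro p hp hne
      have hsplit : s.2.1 p0 + ∑ p' ∈ I.erase p0, s.2.1 p' = ∑ p' ∈ I, s.2.1 p' :=
        Finset.add_sum_erase I _ hp0
      have hzero : ∑ p' ∈ I.erase p0, s.2.1 p' = 0 := by
        rw [hsum] at hsplit; linarith
      have hnn : ∀ p' ∈ I.erase p0, 0 ≤ s.2.1 p' := by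
        intro p' hp'
        rcases hz01 p' (Finset.mem_of_mem_erase hp') with h | h <;> simp [h]
      exact (Finset.sum_eq_zero_iff_of_nonneg hnn).mp hzero p
        (Finset.mem_erase_of_ne_of_mem hne hp)
    refine ⟨fun p => if p = p0 then s.2.2.2 else 0,
            fun p => if p = p0 then s.2.2.1 p0.1 else 0,
            fun e => if e = p0.1 then 0 else s.2.2.1 e,
            fun p hp => ?_, fun e he => ?_, ?_, fun e he => ?_,
            fun p hp => ?_, fun p hp => ?_, fun e he => ?_⟩
    · dsimp only
      constructor <;> split <;>
        first
          | exact hr0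
          | exact (hqb p0.1 (Finset.mem_image_of_mem _ hp0)).1
          | exact le_refl (0:ℝ)
    · dsimp only
      split
      · exact le_refl (0:ℝ)
      · exact (hqb e he).1
    · dsimp only
      rw [Finset.sum_ite_eq' I p0 (fun _ => s.2.2.2)]
      simp [hp0]
    · -- q_e equation
      dsimp only
      by_cases hee : e = p0.1
      · subst hee
        have hp0f : p0 ∈ I.filter (fun p' => p'.1 = p0.1) := by
          simp [Finset.mem_filter, hp0]
        rw [if_pos rfl, zero_add]
        rw [← Finset.add_sum_erase _ _ hp0f, if_pos rfl]
        have : ∑ p ∈ (I.filter (fun p' => p'.1 = p0.1)).erase p0,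
            (if p = p0 then s.2.2.1 p0.1 else 0) = 0 := by
          apply Finset.sum_eq_zero
          intro p hp
          rw [if_neg (Finset.ne_of_mem_erase hp)]
        rw [this, add_zero]
      · rw [if_neg hee]
        have : ∑ p ∈ I.filter (fun p' => p'.1 = e), (if p = p0 then s.2.2.1 p0.1 else 0)
            = 0 := by
          apply Finset.sum_eq_zero
          intro p hp
          have : p ≠ p0 := by
            rintro rfl
            exact hee (Finset.mem_filter.mp hp).2.symm
          rw [if_neg this]
        rw [this, add_zero]
    · -- rr ≤ Rfn
      dsimp only
      by_cases hpp : p = p0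
      · subst hpp
        rw [if_pos rfl, if_pos rfl]
        have h2 := hM2 p hp
        rw [hz1] at h2
        rw [hz1]
        unfold Rfn tauFn at *
        rcases p with ⟨e, b⟩
        cases b <;> simp at h2 ⊢ <;> nlinarith
      · rw [if_neg hpp, if_neg hpp]
        have hz := hz0 p hp hpp
        unfold Rfn
        rw [hz]
        simp
    · dsimp only
      by_cases hpp : p = p0
      · subst hpp
        rw [if_pos rfl, hz1, one_mul]
        exact (hqb p.1 (Finset.mem_image_of_mem _ hp)).2
      · rw [if_neg hpp, hz0 p hp hpp, zero_mul]
    · dsimp only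
      by_cases hee : e = p0.1
      · subst hee
        rw [if_pos rfl]
        have hp0f : p0 ∈ I.filter (fun p' => p'.1 = p0.1) := by
          simp [Finset.mem_filter, hp0]
        have hnn : ∀ p' ∈ (I.filter (fun p' => p'.1 = p0.1)).erase p0, 0 ≤ s.2.1 p' := by
          intro p' hp'
          rcases hz01 p' (Finset.mem_filter.mp (Finset.mem_of_mem_erase hp')).1 with h | h
            <;> simp [h]
        have hge : (1:ℝ) ≤ ∑ p ∈ I.filter (fun p' => p'.1 = p0.1), s.2.1 p := by
          rw [← Finset.add_sum_erase _ _ hp0f, hz1]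
          have := Finset.sum_nonneg hnn
          linarith
        have hle : ∑ p ∈ I.filter (fun p' => p'.1 = p0.1), s.2.1 p ≤ 1 := by
          rw [← hsum]
          apply Finset.sum_le_sum_of_subset_of_nonneg (Finset.filter_subset _ _)
          intro p hp _
          rcases hz01 p hp with h | h <;> simp [h]
        nlinarith [hℓ p0.1]
      · rw [if_neg hee]
        have hzz : ∑ p ∈ I.filter (fun p' => p'.1 = e), s.2.1 p
            = ∑ p ∈ I.filter (fun p' => p'.1 = e), 0 := by
          apply Finset.sum_congr rfl
          intro p hp
          have hpI := (Finset.mem_filter.mp hp).1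
          have : p ≠ p0 := by
            rintro rfl
            exact hee (Finset.mem_filter.mp hp).2.symm
          exact hz0 p hpI this
        rw [hzz, Finset.sum_const, smul_zero, sub_zero, one_mul]
        exact (hqb e he).2
  · -- x = 1 : all z are 0, r = 0
    have hz0 : ∀ p ∈ I, s.2.1 p = 0 := by
      rw [hx1] at hsum
      have hzero : ∑ p ∈ I, s.2.1 p = 0 := by linarith
      have hnn : ∀ p ∈ I, 0 ≤ s.2.1 p := by
        intro p hp; rcases hz01 p hp with h | h <;> simp [h]
      exact fun p hp => (Finset.sum_eq_zero_iff_of_nonneg hnn).mp hzero p hp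
    have hr : s.2.2.2 = 0 := by
      have := hM1; rw [hx1] at this; simp at this; linarith
    refine ⟨fun _ => 0, fun _ => 0, fun e => s.2.2.1 e,
      fun p hp => ⟨le_refl 0, le_refl 0⟩, fun e he => (hqb e he).1,
      by rw [hr, Finset.sum_const, smul_zero],
      fun e he => by rw [Finset.sum_const, smul_zero, add_zero],
      fun p hp => ?_, fun p hp => by rw [hz0 p hp, zero_mul],
      fun e he => ?_⟩
    · unfold Rfn; rw [hz0 p hp]; simp
    · have hzz : ∑ p ∈ I.filter (fun p' => p'.1 = e), s.2.1 p = 0 :=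
        Finset.sum_eq_zero (fun p hp => hz0 p (Finset.mem_filter.mp hp).1)
      rw [hzz, sub_zero, one_mul]
      exact (hqb e he).2

lemma comb_comp {E : Type} (a b : ℝ) (s t : VarPt E) :
    (a • s + b • t).1 = a * s.1 + b * t.1 ∧
    (∀ p, (a • s + b • t).2.1 p = a * s.2.1 p + b * t.2.1 p) ∧
    (∀ e, (a • s + b • t).2.2.1 e = a * s.2.2.1 e + b * t.2.2.1 e) ∧
    (a • s + b • t).2.2.2 = a * s.2.2.2 + b * t.2.2.2 :=
  ⟨rfl, fun _ => rfl, fun _ => rfl, rfl⟩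

lemma dp_convex {E : Type} [DecidableEq E]
    (I : Finset (E × Bool)) (ℓ : E → ℝ) (dvv : E × Bool → ℝ) (δ : ℝ) :
    Convex ℝ {s : VarPt E | sharedCons I ℓ s ∧ dpCons I ℓ dvv δ s ∧ relaxCons I s} := by
  rintro s ⟨⟨hs1, hs2, hs3⟩, ⟨rrs, qqs, qvs, hsA, hsB, hsC, hsD, hsE, hsF, hsG⟩,
    hsx, hsz⟩ t ⟨⟨ht1, ht2, ht3⟩, ⟨rrt, qqt, qvt, htA, htB, htC, htD, htE, htF, htG⟩,
    htx, htz⟩ a b ha hb hab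
  obtain ⟨c1, c2, c3, c4⟩ := comb_comp a b s t
  refine ⟨⟨?_, ?_, ?_⟩, ⟨fun p => a * rrs p + b * rrt p, fun p => a * qqs p + b * qqt p,
    fun e => a * qvs e + b * qvt e, ?_, ?_, ?_, ?_, ?_, ?_, ?_⟩, ?_, ?_⟩
  · rw [c1]
    rw [show ∑ p ∈ I, (a • s + b • t).2.1 p
        = a * (∑ p ∈ I, s.2.1 p) + b * (∑ p ∈ I, t.2.1 p) by
      rw [Finset.mul_sum, Finset.mul_sum, ← Finset.sum_add_distrib]
      exact Finset.sum_congr rfl fun p _ => c2 p]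
    nlinarith
  · intro e he
    rw [Set.mem_Icc] at *
    obtain ⟨u1, u2⟩ := hs2 e he
    obtain ⟨v1, v2⟩ := ht2 e he
    rw [c3 e]
    constructor <;> nlinarith
  · rw [c4]; nlinarith
  · dsimp only
    intro p hp
    obtain ⟨u1, u2⟩ := hsA p hp
    obtain ⟨v1, v2⟩ := htA p hp
    constructor <;> nlinarith
  · dsimp only
    intro e he
    nlinarith [hsB e he, htB e he]
  · dsimp only
    rw [c4, hsC, htC, Finset.mul_sum, Finset.mul_sum, ← Finset.sum_add_distrib]
  · dsimp only
    intro e he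
    rw [c3 e, hsD e he, htD e he, Finset.sum_add_distrib, ← Finset.mul_sum,
      ← Finset.mul_sum]
    ring
  · dsimp only
    intro p hp
    have h1 := hsE p hp
    have h2 := htE p hp
    rw [c2 p]
    unfold Rfn at *
    nlinarith
  · dsimp only
    intro p hp
    have h1 := hsF p hp
    have h2 := htF p hp
    rw [c2 p]
    nlinarith
  · dsimp only
    intro e he
    have h1 := hsG e he
    have h2 := htG e he
    have hzsum : ∑ p ∈ I.filter (fun p' => p'.1 = e), (a • s + b • t).2.1 p
        = a * (∑ p ∈ I.filter (fun p' => p'.1 = e), s.2.1 p)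
          + b * (∑ p ∈ I.filter (fun p' => p'.1 = e), t.2.1 p) := by
      rw [Finset.mul_sum, Finset.mul_sum, ← Finset.sum_add_distrib]
      exact Finset.sum_congr rfl fun p _ => c2 p
    rw [hzsum]
    have h3 : (1 - (a * (∑ p ∈ I.filter (fun p' => p'.1 = e), s.2.1 p)
          + b * (∑ p ∈ I.filter (fun p' => p'.1 = e), t.2.1 p))) * ℓ e
        = a * ((1 - ∑ p ∈ I.filter (fun p' => p'.1 = e), s.2.1 p) * ℓ e)
          + b * ((1 - ∑ p ∈ I.filter (fun p' => p'.1 = e), t.2.1 p) * ℓ e) := by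
      linear_combination (- ℓ e) * hab
    rw [h3]
    exact add_le_add (mul_le_mul_of_nonneg_left h1 ha) (mul_le_mul_of_nonneg_left h2 hb)
  · refine Set.mem_Icc.mpr ⟨?_, ?_⟩ <;> rw [c1] <;> nlinarith [hsx.1, hsx.2, htx.1, htx.2]
  · intro p hp
    refine Set.mem_Icc.mpr ⟨?_, ?_⟩ <;> rw [c2 p] <;>
      nlinarith [(hsz p hp).1, (hsz p hp).2, (htz p hp).1, (htz p hp).2]

lemma dp_relax_mem_hull {E : Type} [DecidableEq E]
    (I : Finset (E × Bool)) (ℓ : E → ℝ) (dvv : E × Bool → ℝ) (δ : ℝ)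
    (hℓ : ∀ e, 0 < ℓ e) (hd0 : ∀ p ∈ I, 0 ≤ dvv p) (hdτ : ∀ p ∈ I, dvv p + ℓ p.1 ≤ δ)
    (s : VarPt E) (hs : sharedCons I ℓ s) (hdp : dpCons I ℓ dvv δ s)
    (hrel : relaxCons I s) :
    s ∈ convexHull ℝ
      {t : VarPt E | sharedCons I ℓ t ∧ dpCons I ℓ dvv δ t ∧ binCons I t} := by
  classical
  obtain ⟨hsum, hqb, hr0⟩ := hs
  obtain ⟨rr, qq, qv, hpos, hqv0, hrsum, hqsum, hRle, hqqz, hqvle⟩ := hdp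
  obtain ⟨hx01, hz01⟩ := hrel
  set S := {t : VarPt E | sharedCons I ℓ t ∧ dpCons I ℓ dvv δ t ∧ binCons I t} with hS
  -- abbreviations
  set μ : E → ℝ := fun e => 1 - ∑ p ∈ I.filter (fun p' => p'.1 = e), s.2.1 p with hμdef
  set Qo : E → ℝ := fun e =>
    if e ∈ I.image Prod.fst then qv e / μ e else s.2.2.1 e with hQodef
  -- basic facts
  have hznn : ∀ p ∈ I, 0 ≤ s.2.1 p := fun p hp => (hz01 p hp).1
  have hqq0 : ∀ p ∈ I, s.2.1 p = 0 → qq p = 0 := by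
    intro p hp h0
    have h1 := (hpos p hp).2
    have h2 := hqqz p hp
    rw [h0, zero_mul] at h2
    linarith
  have hrr0 : ∀ p ∈ I, s.2.1 p = 0 → rr p = 0 := by
    intro p hp h0
    have h1 := (hpos p hp).1
    have h2 := hRle p hp
    rw [h0, hqq0 p hp h0] at h2
    unfold Rfn at h2
    simp at h2
    linarith
  have hfsub : ∀ e, ∑ p ∈ I.filter (fun p' => p'.1 = e), s.2.1 p
      ≤ ∑ p ∈ I, s.2.1 p := fun e =>
    Finset.sum_le_sum_of_subset_of_nonneg (Finset.filter_subset _ _)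
      (fun p hp _ => hznn p hp)
  have hμnn : ∀ e, 0 ≤ μ e := by
    intro e
    have h1 := hfsub e
    have := hx01.1
    simp only [hμdef]
    linarith
  have hμ0 : ∀ e ∈ I.image Prod.fst, μ e = 0 → qv e = 0 := by
    intro e he h0
    have h1 := hqv0 e he
    have h2 := hqvle e he
    have h0' : (1 - ∑ p ∈ I.filter (fun p' => p'.1 = e), s.2.1 p) = 0 := by
      simpa [hμdef] using h0
    rw [h0', zero_mul] at h2
    linarith
  have hQo : ∀ e ∈ I.image Prod.fst, 0 ≤ Qo e ∧ Qo e ≤ ℓ e := by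
    intro e he
    simp only [hQodef, if_pos he]
    rcases eq_or_lt_of_le (hμnn e) with h0 | hpos'
    · rw [← h0, div_zero]
      exact ⟨le_refl 0, (hℓ e).le⟩
    · refine ⟨div_nonneg (hqv0 e he) (hμnn e), ?_⟩
      rw [div_le_iff₀ hpos']
      have := hqvle e he
      simp only [hμdef] at *
      nlinarith
  -- the vertex points
  set Pnone : VarPt E := (1, fun p => if p ∈ I then 0 else s.2.1 p, Qo, 0) with hPn
  set Psome : (E × Bool) → VarPt E := fun p =>
    (0, fun p' => if p' = p then 1 else if p' ∈ I then 0 else s.2.1 p',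
     fun e => if e = p.1 then qq p / s.2.1 p else Qo e, rr p / s.2.1 p) with hPs
  -- membership of vertex points
  have hmem_none : Pnone ∈ S := by
    refine ⟨⟨?_, ?_, le_refl 0⟩,
      ⟨fun _ => 0, fun _ => 0, Qo, fun p hp => ⟨le_refl 0, le_refl 0⟩,
        fun e he => (hQo e he).1, ?_, fun e he => ?_, fun p hp => ?_,
        fun p hp => ?_, fun e he => ?_⟩, Or.inr rfl, fun p hp => Or.inl (if_pos hp)⟩
    · simp only [hPn]
      rw [Finset.sum_congr rfl (fun p hp => if_pos hp), Finset.sum_const, smul_zero,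
        add_zero]
    · intro e he
      exact ⟨(hQo e he).1, (hQo e he).2⟩
    · simp only [hPn]
      rw [Finset.sum_const, smul_zero]
    · simp only [hPn]
      rw [Finset.sum_const, smul_zero, add_zero]
    · simp only [hPn, Rfn, if_pos hp]
      rcases p with ⟨e, b⟩ <;> cases b <;> simp
    · simp only [hPn, if_pos hp]
      rw [zero_mul]
    · simp only [hPn]
      have : ∑ p ∈ I.filter (fun p' => p'.1 = e), (if p ∈ I then (0:ℝ) else s.2.1 p)
          = 0 :=
        Finset.sum_eq_zero (fun p hp => if_pos (Finset.mem_filter.mp hp).1)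
      rw [this, sub_zero, one_mul]
      exact (hQo e he).2
  have hmem_some : ∀ p ∈ I, Psome p ∈ S := by
    intro p hp
    have hpe : p.1 ∈ I.image Prod.fst := Finset.mem_image_of_mem _ hp
    have hqdiv : 0 ≤ qq p / s.2.1 p ∧ qq p / s.2.1 p ≤ ℓ p.1 := by
      rcases eq_or_lt_of_le (hznn p hp) with h0 | hpos'
      · rw [← h0, div_zero]
        exact ⟨le_refl 0, (hℓ p.1).le⟩
      · refine ⟨div_nonneg (hpos p hp).2 (hznn p hp), ?_⟩
        rw [div_le_iff₀ hpos']
        have := hqqz p hp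
        nlinarith
    have hrdiv : 0 ≤ rr p / s.2.1 p := by
      rcases eq_or_lt_of_le (hznn p hp) with h0 | hpos'
      · rw [← h0, div_zero]
      · exact div_nonneg (hpos p hp).1 (hznn p hp)
    have hzsum1 : ∑ p' ∈ I, (if p' = p then (1:ℝ) else if p' ∈ I then 0 else s.2.1 p')
        = 1 := by
      have hcg : ∀ p' ∈ I, (if p' = p then (1:ℝ) else if p' ∈ I then 0 else s.2.1 p')
          = if p' = p then (1:ℝ) else 0 := by
        intro p' hp'
        by_cases h : p' = p
        · simp [h]
        · simp [h, hp']
      rw [Finset.sum_congr rfl hcg, Finset.sum_ite_eq' I p (fun _ => (1:ℝ)), if_pos hp]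
    refine ⟨⟨?_, ?_, hrdiv⟩,
      ⟨fun p' => if p' = p then rr p / s.2.1 p else 0,
       fun p' => if p' = p then qq p / s.2.1 p else 0,
       fun e => if e = p.1 then 0 else Qo e, ?_, ?_, ?_, ?_, ?_, ?_, ?_⟩,
      Or.inl rfl, fun p' hp' => ?_⟩
    · simp only [hPs]
      rw [hzsum1, zero_add]
    · intro e he
      try simp only [hPs]
      by_cases h : e = p.1
      · rw [if_pos h, h]
        exact ⟨hqdiv.1, hqdiv.2⟩
      · rw [if_neg h]
        exact ⟨(hQo e he).1, (hQo e he).2⟩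
    · intro p' hp'
      dsimp only
      constructor <;> split <;>
        first | exact hrdiv | exact hqdiv.1 | exact le_refl (0:ℝ)
    · intro e he
      dsimp only
      split
      · exact le_refl (0:ℝ)
      · exact (hQo e he).1
    · dsimp only
      try simp only [hPs]
      rw [Finset.sum_ite_eq' I p (fun _ => rr p / s.2.1 p), if_pos hp]
    · intro e he
      dsimp only
      try simp only [hPs]
      by_cases h : e = p.1
      · rw [if_pos h, if_pos h, zero_add]
        have hpf : p ∈ I.filter (fun p' => p'.1 = e) := by
          simp [Finset.mem_filter, hp, h.symm]
        rw [← Finset.add_sum_erase _ _ hpf, if_pos rfl]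
        rw [Finset.sum_eq_zero (fun p' hp' => if_neg (Finset.ne_of_mem_erase hp')),
          add_zero]
      · rw [if_neg h, if_neg h]
        rw [Finset.sum_eq_zero (fun p' hp' => if_neg (by
          rintro rfl
          exact h (Finset.mem_filter.mp hp').2.symm)), add_zero]
    · intro p' hp'
      dsimp only
      try simp only [hPs]
      by_cases h : p' = p
      · subst h
        rw [if_pos rfl, if_pos rfl, if_pos rfl]
        rcases eq_or_lt_of_le (hznn p' hp') with h0 | hpos'
        · rw [← h0, div_zero, div_zero]
          unfold Rfn
          have h1 := hdτ p' hp'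
          have h2 := hd0 p' hp'
          have h3 := hℓ p'.1
          split <;> nlinarith
        · have h1 := hRle p' hp'
          have key : rr p' / s.2.1 p' ≤ Rfn ℓ dvv δ p' (qq p') (s.2.1 p') / s.2.1 p' :=
            (div_le_div_iff_of_pos_right hpos').mpr h1
          refine le_trans key (le_of_eq ?_)
          unfold Rfn
          field_simp
          try ring
      · rw [if_neg h, if_neg h, if_neg h, if_pos hp']
        unfold Rfn
        simp
    · intro p' hp'
      dsimp only
      try simp only [hPs]
      by_cases h : p' = p
      · subst h
        rw [if_pos rfl, if_pos rfl, one_mul]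
        exact hqdiv.2
      · rw [if_neg h, if_neg h, if_pos hp', zero_mul]
    · intro e he
      dsimp only
      try simp only [hPs]
      by_cases h : e = p.1
      · rw [if_pos h]
        have hpf : p ∈ I.filter (fun p' => p'.1 = e) := by
          simp [Finset.mem_filter, hp, h.symm]
        have hsum1 : ∑ p' ∈ I.filter (fun p'' => p''.1 = e),
            (if p' = p then (1:ℝ) else if p' ∈ I then 0 else s.2.1 p') = 1 := by
          rw [← Finset.add_sum_erase _ _ hpf, if_pos rfl]
          rw [Finset.sum_eq_zero (fun p' hp' => by
            rw [if_neg (Finset.ne_of_mem_erase hp'),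
              if_pos (Finset.mem_filter.mp (Finset.mem_of_mem_erase hp')).1]), add_zero]
        rw [hsum1, sub_self, zero_mul]
      · rw [if_neg h]
        have hsum0 : ∑ p' ∈ I.filter (fun p'' => p''.1 = e),
            (if p' = p then (1:ℝ) else if p' ∈ I then 0 else s.2.1 p') = 0 := by
          apply Finset.sum_eq_zero
          intro p' hp'
          rw [if_neg (by rintro rfl; exact h (Finset.mem_filter.mp hp').2.symm),
            if_pos (Finset.mem_filter.mp hp').1]
        rw [hsum0, sub_zero, one_mul]
        exact (hQo e he).2
    · simp only [hPs]
      by_cases h : p' = p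
      · rw [if_pos h]; right; rfl
      · rw [if_neg h, if_pos hp']; left; rfl
  -- weights and index set
  set T : Finset (Option (E × Bool)) := insert none (I.image some) with hT
  set w : Option (E × Bool) → ℝ := fun o => o.elim s.1 s.2.1 with hw
  set P : Option (E × Bool) → VarPt E := fun o => o.elim Pnone Psome with hP
  have hnone : (none : Option (E × Bool)) ∉ I.image some := by simp
  have hinj : ∀ x ∈ I, ∀ y ∈ I, some x = some y → x = y :=
    fun x _ y _ h => Option.some.inj h
  have hwsum : ∑ o ∈ T, w o = 1 := by
    rw [hT, Finset.sum_insert hnone, Finset.sum_image hinj]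
    simpa [hw] using hsum
  have hwnn : ∀ o ∈ T, 0 ≤ w o := by
    intro o ho
    rw [hT, Finset.mem_insert] at ho
    rcases ho with rfl | ho
    · exact hx01.1
    · obtain ⟨p, hp, rfl⟩ := Finset.mem_image.mp ho
      exact hznn p hp
  have hmem : ∀ o ∈ T, P o ∈ S := by
    intro o ho
    rw [hT, Finset.mem_insert] at ho
    rcases ho with rfl | ho
    · exact hmem_none
    · obtain ⟨p, hp, rfl⟩ := Finset.mem_image.mp ho
      exact hmem_some p hp
  have hcm := Finset.centerMass_mem_convexHull T hwnn
    (by rw [hwsum]; exact one_pos) hmem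
  rw [Finset.centerMass_eq_of_sum_1 T P hwsum] at hcm
  have hexp : ∑ o ∈ T, w o • P o = s.1 • Pnone + ∑ p ∈ I, s.2.1 p • Psome p := by
    rw [hT, Finset.sum_insert hnone, Finset.sum_image hinj]
    simp only [hw, hP, Option.elim]
  rw [hexp] at hcm
  -- the convex combination reproduces s
  suffices hseq : s = s.1 • Pnone + ∑ p ∈ I, s.2.1 p • Psome p by
    rw [hS] at hcm
    rw [← hseq] at hcm
    exact hcm
  -- component formulas for the combination
  have hc1 : (s.1 • Pnone + ∑ p ∈ I, s.2.1 p • Psome p).1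
      = s.1 * Pnone.1 + ∑ p ∈ I, s.2.1 p * (Psome p).1 := by
    rw [show (s.1 • Pnone + ∑ p ∈ I, s.2.1 p • Psome p).1
        = s.1 * Pnone.1 + (∑ p ∈ I, s.2.1 p • Psome p).1 from rfl, Prod.fst_sum]
    exact congrArg _ (Finset.sum_congr rfl fun p _ => rfl)
  have hc2 : ∀ p', (s.1 • Pnone + ∑ p ∈ I, s.2.1 p • Psome p).2.1 p'
      = s.1 * Pnone.2.1 p' + ∑ p ∈ I, s.2.1 p * (Psome p).2.1 p' := by
    intro p'
    rw [show (s.1 • Pnone + ∑ p ∈ I, s.2.1 p • Psome p).2.1 p'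
        = s.1 * Pnone.2.1 p' + ((∑ p ∈ I, s.2.1 p • Psome p).2.1) p' from rfl,
      Prod.snd_sum, Prod.fst_sum, Finset.sum_apply]
    exact congrArg _ (Finset.sum_congr rfl fun p _ => rfl)
  have hc3 : ∀ e, (s.1 • Pnone + ∑ p ∈ I, s.2.1 p • Psome p).2.2.1 e
      = s.1 * Pnone.2.2.1 e + ∑ p ∈ I, s.2.1 p * (Psome p).2.2.1 e := by
    intro e
    rw [show (s.1 • Pnone + ∑ p ∈ I, s.2.1 p • Psome p).2.2.1 e
        = s.1 * Pnone.2.2.1 e + ((∑ p ∈ I, s.2.1 p • Psome p).2.2.1) e from rfl,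
      Prod.snd_sum, Prod.snd_sum, Prod.fst_sum, Finset.sum_apply]
    exact congrArg _ (Finset.sum_congr rfl fun p _ => rfl)
  have hc4 : (s.1 • Pnone + ∑ p ∈ I, s.2.1 p • Psome p).2.2.2
      = s.1 * Pnone.2.2.2 + ∑ p ∈ I, s.2.1 p * (Psome p).2.2.2 := by
    rw [show (s.1 • Pnone + ∑ p ∈ I, s.2.1 p • Psome p).2.2.2
        = s.1 * Pnone.2.2.2 + ((∑ p ∈ I, s.2.1 p • Psome p).2.2.2) from rfl,
      Prod.snd_sum, Prod.snd_sum, Prod.snd_sum]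
    exact congrArg _ (Finset.sum_congr rfl fun p _ => rfl)
  have hPn1 : Pnone.1 = 1 := rfl
  have hPs1 : ∀ p, (Psome p).1 = 0 := fun p => rfl
  obtain ⟨s1, s2, s3, s4⟩ := s
  refine Prod.ext ?_ (Prod.ext ?_ (Prod.ext ?_ ?_))
  · rw [hc1, hPn1]
    simp only [hPs1, mul_zero, Finset.sum_const_zero, mul_one, add_zero]
  · -- z component
    funext p'
    rw [hc2 p']
    by_cases hp' : p' ∈ I
    · have hterm : ∀ p ∈ I, s2 p * (Psome p).2.1 p'
          = if p' = p then s2 p else 0 := by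
        intro p hp
        simp only [hPs]
        by_cases h : p' = p
        · rw [if_pos h, if_pos h, mul_one]
        · rw [if_neg h, if_neg h, if_pos hp', mul_zero]
      rw [Finset.sum_congr rfl hterm, Finset.sum_ite_eq I p' s2, if_pos hp']
      simp only [hPn, if_pos hp', mul_zero, zero_add]
    · have hterm : ∀ p ∈ I, s2 p * (Psome p).2.1 p' = s2 p * s2 p' := by
        intro p hp
        have h : p' ≠ p := fun hcon => hp' (hcon ▸ hp)
        simp only [hPs]
        rw [if_neg h, if_neg hp']
      rw [Finset.sum_congr rfl hterm, ← Finset.sum_mul]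
      simp only [hPn, if_neg hp']
      simp only at hsum
      linear_combination (- s2 p') * hsum
  · -- q component
    funext e
    rw [hc3 e]
    by_cases he : e ∈ I.image Prod.fst
    · have hQoe : Qo e = qv e / μ e := by simp only [hQodef, if_pos he]
      have hsplit := Finset.sum_filter_add_sum_filter_not I (fun p => p.1 = e)
        (fun p => s2 p * (Psome p).2.2.1 e)
      have hf : ∑ p ∈ I.filter (fun p => p.1 = e), s2 p * (Psome p).2.2.1 e
          = ∑ p ∈ I.filter (fun p => p.1 = e), qq p := by
        apply Finset.sum_congr rfl
        intro p hp
        have hpI := (Finset.mem_filter.mp hp).1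
        have hpe : p.1 = e := (Finset.mem_filter.mp hp).2
        simp only [hPs]
        rw [if_pos hpe.symm]
        by_cases h0 : s2 p = 0
        · rw [h0, zero_mul, hqq0 p hpI h0]
        · rw [mul_comm, div_mul_cancel₀ _ h0]
      have hnf : ∑ p ∈ I.filter (fun p => ¬p.1 = e), s2 p * (Psome p).2.2.1 e
          = (∑ p ∈ I.filter (fun p => ¬p.1 = e), s2 p) * Qo e := by
        rw [Finset.sum_mul]
        apply Finset.sum_congr rfl
        intro p hp
        have hpe : ¬p.1 = e := (Finset.mem_filter.mp hp).2
        simp only [hPs]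
        rw [if_neg (fun hcon => hpe hcon.symm)]
      have hIsplit : ∑ p ∈ I.filter (fun p => p.1 = e), s2 p
            + ∑ p ∈ I.filter (fun p => ¬p.1 = e), s2 p = ∑ p ∈ I, s2 p :=
        Finset.sum_filter_add_sum_filter_not I (fun p => p.1 = e) s2
      have hμe : s1 + ∑ p ∈ I.filter (fun p => ¬p.1 = e), s2 p = μ e := by
        simp only [hμdef]
        simp only at hsum
        linarith [hsum, hIsplit]
      have hμQo : μ e * Qo e = qv e := by
        rw [hQoe]
        rcases eq_or_lt_of_le (hμnn e) with h0 | hpos'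
        · rw [← h0, zero_mul, hμ0 e he h0.symm]
        · rw [mul_comm, div_mul_cancel₀ _ (ne_of_gt hpos')]
      rw [← hsplit, hf, hnf]
      have hq := hqsum e he
      simp only at hq
      simp only [hPn]
      linear_combination hq - hμQo - Qo e * hμe
    · have hQoe : Qo e = s3 e := by simp only [hQodef, if_neg he]
      have hterm : ∀ p ∈ I, s2 p * (Psome p).2.2.1 e = s2 p * s3 e := by
        intro p hp
        have h : ¬e = p.1 := fun hcon => he (hcon ▸ Finset.mem_image_of_mem _ hp)
        simp only [hPs]
        rw [if_neg h, hQoe]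
      rw [Finset.sum_congr rfl hterm, ← Finset.sum_mul]
      simp only [hPn, hQoe]
      simp only at hsum
      linear_combination (- s3 e) * hsum
  · -- r component
    rw [hc4]
    have hterm : ∀ p ∈ I, s2 p * (Psome p).2.2.2 = rr p := by
      intro p hp
      simp only [hPs]
      by_cases h0 : s2 p = 0
      · rw [h0, zero_mul, hrr0 p hp h0]
      · rw [mul_comm, div_mul_cancel₀ _ h0]
    rw [Finset.sum_congr rfl hterm]
    simp only [hPn, mul_zero, zero_add]
    simpa using hrsum
/-- `D¹_v = D²_v ⊆ conv(D²_v) = D̄²_v ⊆ D̄¹_v`: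
the feasible set of the disjunctive-programming MILP system equals the feasible set of
the big-M MILP system; the continuous relaxation of the disjunctive-programming system
equals `conv(D²_v)` and is contained in the continuous relaxation of the big-M system. -/
theorem bigM_vs_disjunctive
    (E : Type) [Fintype E] [DecidableEq E]
    (I : Finset (E × Bool)) (ℓ : E → ℝ) (dvv : E × Bool → ℝ) (δ : ℝ)
    (hδ : 0 < δ) (hℓ : ∀ e, 0 < ℓ e)
    (hd0 : ∀ p ∈ I, 0 ≤ dvv p)
    -- `δ − τ_{ve'i'}(q) ≥ 0` for `q ∈ [0, ℓ_{e'}]`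
    (hdτ : ∀ p ∈ I, dvv p + ℓ p.1 ≤ δ) :
    ({s : VarPt E | sharedCons I ℓ s ∧ bigMCons I ℓ dvv δ s ∧ binCons I s}
        = {s | sharedCons I ℓ s ∧ dpCons I ℓ dvv δ s ∧ binCons I s}) ∧
    ({s : VarPt E | sharedCons I ℓ s ∧ dpCons I ℓ dvv δ s ∧ binCons I s}
        ⊆ convexHull ℝ {s | sharedCons I ℓ s ∧ dpCons I ℓ dvv δ s ∧ binCons I s}) ∧
    (convexHull ℝ {s : VarPt E | sharedCons I ℓ s ∧ dpCons I ℓ dvv δ s ∧ binCons I s}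
        = {s | sharedCons I ℓ s ∧ dpCons I ℓ dvv δ s ∧ relaxCons I s}) ∧
    ({s : VarPt E | sharedCons I ℓ s ∧ dpCons I ℓ dvv δ s ∧ relaxCons I s}
        ⊆ {s | sharedCons I ℓ s ∧ bigMCons I ℓ dvv δ s ∧ relaxCons I s}) := by
  constructor
  · ext s
    simp only [Set.mem_setOf_eq]
    constructor
    · rintro ⟨h1, h2, h3⟩
      exact ⟨h1, bigM_bin_to_dp I ℓ dvv δ hℓ hd0 hdτ s h1 h2 h3, h3⟩
    · rintro ⟨h1, h2, h3⟩
      exact ⟨h1, dp_to_bigM I ℓ dvv δ hℓ hd0 hdτ s h1 h2 (bin_to_relax I s h3), h3⟩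
  refine ⟨subset_convexHull ℝ _, ?_, ?_⟩
  · apply Set.Subset.antisymm
    · apply convexHull_min
      · rintro s ⟨h1, h2, h3⟩
        exact ⟨h1, h2, bin_to_relax I s h3⟩
      · exact dp_convex I ℓ dvv δ
    · rintro s ⟨h1, h2, h3⟩
      exact dp_relax_mem_hull I ℓ dvv δ hℓ hd0 hdτ s h1 h2 h3
  · rintro s ⟨h1, h2, h3⟩
    exact ⟨h1, dp_to_bigM I ℓ dvv δ hℓ hd0 hdτ s h1 h2 h3, h3⟩
end
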